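/- A regular category with cokernels is normal (i.e., every regular epimorphism is a normal epimorphism) if and only if every morphism whose kernel is zero is a monomorphism. -/

import Mathlib

open CategoryTheory CategoryTheory.Limits

universe v u

noncomputable section

/-!
If regular epimorphisms are normal and `f` has zero kernel, then the coequalizer `e` of the kernel
pair of `f` is a normal epimorphism whose kernel is zero (it embeds in the kernel of `f`), hence an
isomorphism; so the two projections of the kernel pair agree and `f` is mono.

Conversely, factor a regular epimorphism `f` through its coimage as `f = q ≫ u` with
`q = cokernel.π (kernel.ι f)`. Pulling `q` back along `kernel.ι u` gives a regular epimorphism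
onto `kernel u` whose composite with `kernel.ι u` factors through `kernel.ι f ≫ q = 0`, so
`kernel u` is zero and `u` is mono. Since `f` is a strong epimorphism, `u` is an isomorphism, and
`f` is the cokernel of its kernel.
-/

namespace CategoryTheory

variable {C : Type u} [Category.{v} C]

theorem mono_of_mono_coequalizer_π_kernelPair {X Y : C} (f : X ⟶ Y) [HasPullback f f]
    [HasCoequalizer (pullback.fst f f) (pullback.snd f f)]
    [Mono (coequalizer.π (pullback.fst f f) (pullback.snd f f))] : Mono f := by
  have h : pullback.fst f f = pullback.snd f f := (cancel_mono _).1 (coequalizer.condition _ _)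
  exact (mono_iff_fst_eq_snd (pullbackIsPullback f f)).2 h

variable [HasZeroMorphisms C]

theorem isZero_kernel_of_comp_eq {X Y Z : C} {e : X ⟶ Y} {m : Y ⟶ Z} {f : X ⟶ Z} [HasKernel e]
    [HasKernel f] (hf : IsZero (kernel f)) (hfac : e ≫ m = f) : IsZero (kernel e) := by
  subst hfac
  exact IsZero.of_mono (kernel.lift (e ≫ m) (kernel.ι e) (by simp)) hf

theorem NormalEpi.isIso_of_isZero_kernel {X Y : C} {f : X ⟶ Y} [HasKernel f] (hf : NormalEpi f)
    (h : IsZero (kernel f)) : IsIso f := by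
  have hg : hf.g = 0 := by
    rw [← kernel.lift_ι f hf.g hf.w, h.eq_zero_of_tgt (kernel.lift f hf.g hf.w), zero_comp]
  exact CokernelCofork.IsColimit.isIso_π _ hf.isColimit hg

theorem mono_of_isZero_kernel_of_normalEpi_coequalizer {X Y : C} (f : X ⟶ Y) [HasKernel f]
    [HasPullback f f] [HasCoequalizer (pullback.fst f f) (pullback.snd f f)]
    [HasKernel (coequalizer.π (pullback.fst f f) (pullback.snd f f))]
    (he : NormalEpi (coequalizer.π (pullback.fst f f) (pullback.snd f f)))
    (hf : IsZero (kernel f)) : Mono f := by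
  have : IsIso (coequalizer.π (pullback.fst f f) (pullback.snd f f)) :=
    he.isIso_of_isZero_kernel <|
      isZero_kernel_of_comp_eq hf (coequalizer.π_desc f pullback.condition)
  exact mono_of_mono_coequalizer_π_kernelPair f

abbrev normalEpiCokernelπ {X Y : C} (g : X ⟶ Y) [HasCokernel g] : NormalEpi (cokernel.π g) :=
  ⟨_, g, cokernel.condition g, cokernelIsCokernel g⟩

section Coimage

variable {X Y : C} (f : X ⟶ Y) [HasKernel f] [HasCokernel (kernel.ι f)]

abbrev normalEpiOfIsIsoFactorThruCoimage [IsIso (Abelian.factorThruCoimage f)] : NormalEpi f :=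
  (normalEpiCokernelπ (kernel.ι f)).ofArrowIso
    (Arrow.isoMk (Iso.refl _) (asIso (Abelian.factorThruCoimage f)) (by simp))

theorem isIso_factorThruCoimage_of_strongEpi [StrongEpi f] [Mono (Abelian.factorThruCoimage f)] :
    IsIso (Abelian.factorThruCoimage f) := by
  have : StrongEpi (Abelian.coimage.π f ≫ Abelian.factorThruCoimage f) := by
    rwa [Abelian.coimage.fac]
  have : StrongEpi (Abelian.factorThruCoimage f) := strongEpi_of_strongEpi (Abelian.coimage.π f) _
  exact isIso_of_mono_of_strongEpi _

theorem comp_coimage_π_eq_zero {W : C} (g : W ⟶ X) (hg : g ≫ f = 0) :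
    g ≫ Abelian.coimage.π f = 0 := by
  rw [← kernel.lift_ι f g hg, Category.assoc, cokernel.condition, comp_zero]

theorem isZero_kernel_factorThruCoimage [HasKernel (Abelian.factorThruCoimage f)]
    [HasPullback (Abelian.coimage.π f) (kernel.ι (Abelian.factorThruCoimage f))]
    [Epi (pullback.snd (Abelian.coimage.π f) (kernel.ι (Abelian.factorThruCoimage f)))] :
    IsZero (kernel (Abelian.factorThruCoimage f)) := by
  refine IsZero.of_mono_eq_zero (kernel.ι _) ?_
  rw [← cancel_epi
    (pullback.snd (Abelian.coimage.π f) (kernel.ι (Abelian.factorThruCoimage f))),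
    comp_zero, ← pullback.condition]
  apply comp_coimage_π_eq_zero
  have h := pullback.condition (f := Abelian.coimage.π f)
    (g := kernel.ι (Abelian.factorThruCoimage f)) =≫ Abelian.factorThruCoimage f
  rwa [Category.assoc, Abelian.coimage.fac, Category.assoc, kernel.condition, comp_zero] at h

end Coimage

end CategoryTheory

theorem stmt5 {C : Type u} [Category.{v} C] [HasZeroMorphisms C]
    [HasFiniteLimits C] [HasCokernels C]
    -- regularity: coequalizers of kernel pairs exist
    (hcoeq : ∀ {A B : C} (f : A ⟶ B), HasCoequalizer (pullback.fst f f) (pullback.snd f f))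
    -- regularity: regular epimorphisms are stable under pullback
    (hstab : ∀ {A B A' : C} (f : A ⟶ B) (g : A' ⟶ B),
      Nonempty (RegularEpi f) → Nonempty (RegularEpi (pullback.snd f g))) :
    (∀ {A B : C} (f : A ⟶ B), Nonempty (RegularEpi f) → Nonempty (NormalEpi f)) ↔
      (∀ {A B : C} (f : A ⟶ B), IsZero (kernel f) → Mono f) := by
  constructor
  · intro hnorm A B f hf
    have := hcoeq f
    obtain ⟨he⟩ := hnorm _ ⟨coequalizerRegular (pullback.fst f f) (pullback.snd f f)⟩
    exact mono_of_isZero_kernel_of_normalEpi_coequalizer f he hf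
  · rintro hmono A B f ⟨hf⟩
    obtain ⟨hq⟩ := hstab (Abelian.coimage.π f) (kernel.ι (Abelian.factorThruCoimage f))
      ⟨(normalEpiCokernelπ (kernel.ι f)).regularEpi⟩
    have := hq.epi
    have := hmono _ (isZero_kernel_factorThruCoimage f)
    have := hf.effectiveEpi
    have := isIso_factorThruCoimage_of_strongEpi f
    exact ⟨normalEpiOfIsIsoFactorThruCoimage f⟩
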